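/- Let X₁,…,X_q be i.i.d. integrable random vectors in ℝ^d with finite second moments, let g ∈ ℝ^d, F ⊆ {1,…,d} with complement F^c, μ > 0, and nonnegative constants ε_F, ε_{F^c}, ε_abs, ε_μ. Suppose (i) ‖E[(X₁)_F] − g_F‖² ≤ ε_μ μ², and (ii) E‖(X₁)_F‖² ≤ ε_F‖g_F‖² + ε_{F^c}‖g_{F^c}‖² + ε_abs μ². Let X̄ = (1/q)Σ_{i=1}^q X_i. Then: (a) ‖E[X̄_F] − g_F‖² ≤ ε_μ μ², and (b) E‖X̄_F‖² ≤ (ε_F/q + 2)‖g_F‖² + (ε_{F^c}/q)‖g_{F^c}‖² + (ε_abs/q + 2ε_μ)μ². -/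

import Mathlib

/-!
Restriction to `F` is linear, so the restricted average is the average of the vectors
`Y i = restr F (X i)`, which are again pairwise independent and identically distributed with mean
`m = E[restr F (X 0)]`; this gives the bias bound. Expanding `‖∑ i, Y i‖²` into inner products and
using `E⟪Y i, Y j⟫ = ‖m‖²` for `i ≠ j` gives, for the average `Ȳ`, the bias–variance identity
`E‖Ȳ‖² = (E‖Y 0‖² - ‖m‖²) / q + ‖m‖²`, and `‖m‖² ≤ 2‖m - restr F g‖² + 2‖restr F g‖²` turns the
bias bound into the second-moment bound.
-/

open MeasureTheory ProbabilityTheory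

noncomputable section

/-- restriction of a vector to a support `F` (coordinates outside `F` set to 0) -/
def restr {d : ℕ} (F : Finset (Fin d)) (v : EuclideanSpace ℝ (Fin d)) :
    EuclideanSpace ℝ (Fin d) :=
  WithLp.toLp 2 (fun i => if i ∈ F then v i else 0)

def restrL {d : ℕ} (F : Finset (Fin d)) :
    EuclideanSpace ℝ (Fin d) →L[ℝ] EuclideanSpace ℝ (Fin d) :=
  LinearMap.toContinuousLinearMap
    { toFun := restr F
      map_add' := fun u v => by ext i; by_cases h : i ∈ F <;> simp [restr, h]
      map_smul' := fun c v => by ext i; by_cases h : i ∈ F <;> simp [restr, h] }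

lemma restrL_apply {d : ℕ} (F : Finset (Fin d)) (v : EuclideanSpace ℝ (Fin d)) :
    restrL F v = restr F v := rfl

lemma norm_sq_le_two_mul_norm_sub_sq_add_norm_sq {E : Type*} [SeminormedAddCommGroup E]
    (x y : E) : ‖x‖ ^ 2 ≤ 2 * (‖x - y‖ ^ 2 + ‖y‖ ^ 2) :=
  calc ‖x‖ ^ 2 ≤ (‖x - y‖ + ‖y‖) ^ 2 := by gcongr; exact norm_le_norm_sub_add x y
    _ ≤ 2 * (‖x - y‖ ^ 2 + ‖y‖ ^ 2) := add_sq_le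

lemma MeasureTheory.MemLp.integrable_inner {Ω E : Type*} [MeasurableSpace Ω] {P : Measure Ω}
    [NormedAddCommGroup E] [InnerProductSpace ℝ E] {X Y : Ω → E} (hX : MemLp X 2 P)
    (hY : MemLp Y 2 P) : Integrable (fun ω => inner ℝ (X ω) (Y ω)) P :=
  memLp_one_iff_integrable.1 ((innerSL ℝ).memLp_of_bilin 1 hX hY)

lemma integral_average_of_integral_eq {Ω E ι : Type*} [MeasurableSpace Ω] {P : Measure Ω}
    [NormedAddCommGroup E] [NormedSpace ℝ E] [Fintype ι] [Nonempty ι] {Y : ι → Ω → E} {m : E}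
    (hint : ∀ i, Integrable (Y i) P) (hmean : ∀ i, ∫ ω, Y i ω ∂P = m) :
    ∫ ω, (Fintype.card ι : ℝ)⁻¹ • ∑ i, Y i ω ∂P = m := by
  have hn : (Fintype.card ι : ℝ) ≠ 0 := Nat.cast_ne_zero.2 Fintype.card_ne_zero
  rw [integral_smul, integral_finsetSum _ fun i _ => hint i]
  simp [hmean, Finset.card_univ, ← Nat.cast_smul_eq_nsmul ℝ, smul_smul, hn]

section InnerProductSpace

variable {Ω E ι : Type*} [MeasurableSpace Ω] {P : Measure Ω}
  [NormedAddCommGroup E] [InnerProductSpace ℝ E] [CompleteSpace E]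
  [MeasurableSpace E] [BorelSpace E]

lemma ProbabilityTheory.IndepFun.integral_inner {X Y : Ω → E} (h : IndepFun X Y P)
    (hX : Integrable X P) (hY : Integrable Y P) :
    ∫ ω, inner ℝ (X ω) (Y ω) ∂P = inner ℝ (∫ ω, X ω ∂P) (∫ ω, Y ω ∂P) :=
  h.integral_bilin hX hY (innerSL ℝ)

variable [IsFiniteMeasure P] [Fintype ι] {Y : ι → Ω → E} {m : E} {s : ℝ}

lemma integral_norm_sq_sum_of_pairwise_indepFun (hL2 : ∀ i, MemLp (Y i) 2 P)
    (hindep : Pairwise fun i j => IndepFun (Y i) (Y j) P)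
    (hmean : ∀ i, ∫ ω, Y i ω ∂P = m) (hsq : ∀ i, ∫ ω, ‖Y i ω‖ ^ 2 ∂P = s) :
    ∫ ω, ‖∑ i, Y i ω‖ ^ 2 ∂P =
      Fintype.card ι * (s - ‖m‖ ^ 2) + (Fintype.card ι) ^ 2 * ‖m‖ ^ 2 := by
  classical
  have hinner : ∀ i j, ∫ ω, inner ℝ (Y i ω) (Y j ω) ∂P =
      ‖m‖ ^ 2 + if i = j then s - ‖m‖ ^ 2 else 0 := by
    intro i j
    rcases eq_or_ne i j with rfl | hij
    · simp [hsq]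
    · rw [(hindep hij).integral_inner ((hL2 i).integrable one_le_two)
        ((hL2 j).integrable one_le_two), hmean, hmean, if_neg hij,
        real_inner_self_eq_norm_sq, add_zero]
  calc ∫ ω, ‖∑ i, Y i ω‖ ^ 2 ∂P = ∫ ω, ∑ i, ∑ j, inner ℝ (Y i ω) (Y j ω) ∂P := by
        simp_rw [← real_inner_self_eq_norm_sq, sum_inner, inner_sum]
    _ = ∑ i, ∑ j, ∫ ω, inner ℝ (Y i ω) (Y j ω) ∂P := by
        rw [integral_finsetSum _ fun i _ => integrable_finsetSum _ fun j _ =>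
          (hL2 i).integrable_inner (hL2 j)]
        exact Finset.sum_congr rfl fun i _ =>
          integral_finsetSum _ fun j _ => (hL2 i).integrable_inner (hL2 j)
    _ = _ := by
        simp only [hinner, Finset.sum_add_distrib, Finset.sum_ite_eq, Finset.mem_univ, if_true,
          Finset.sum_const, Finset.card_univ, nsmul_eq_mul]
        ring

lemma integral_norm_sq_average_of_pairwise_indepFun [Nonempty ι] (hL2 : ∀ i, MemLp (Y i) 2 P)
    (hindep : Pairwise fun i j => IndepFun (Y i) (Y j) P)
    (hmean : ∀ i, ∫ ω, Y i ω ∂P = m) (hsq : ∀ i, ∫ ω, ‖Y i ω‖ ^ 2 ∂P = s) :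
    ∫ ω, ‖(Fintype.card ι : ℝ)⁻¹ • ∑ i, Y i ω‖ ^ 2 ∂P =
      (s - ‖m‖ ^ 2) / Fintype.card ι + ‖m‖ ^ 2 := by
  have hn : (Fintype.card ι : ℝ) ≠ 0 := Nat.cast_ne_zero.2 Fintype.card_ne_zero
  simp only [norm_smul, mul_pow, norm_inv, RCLike.norm_natCast]
  rw [integral_const_mul, integral_norm_sq_sum_of_pairwise_indepFun hL2 hindep hmean hsq]
  field_simp

end InnerProductSpace

theorem batching_lemma_general (d q : ℕ) (hq : 0 < q)
    {Ω : Type} [MeasurableSpace Ω] (P : Measure Ω) [IsProbabilityMeasure P]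
    (X : Fin q → Ω → EuclideanSpace ℝ (Fin d))
    (hindep : iIndepFun X P)
    (hident : ∀ i j, IdentDistrib (X i) (X j) P P)
    (hL2 : ∀ i, MemLp (X i) 2 P)
    (g : EuclideanSpace ℝ (Fin d)) (F : Finset (Fin d))
    (μ εF εFc εabs εμ : ℝ)
    (hbias : ‖(∫ ω, restr F (X ⟨0, hq⟩ ω) ∂P) - restr F g‖ ^ 2 ≤ εμ * μ ^ 2)
    (hmoment : ∫ ω, ‖restr F (X ⟨0, hq⟩ ω)‖ ^ 2 ∂P ≤
      εF * ‖restr F g‖ ^ 2 + εFc * ‖restr Fᶜ g‖ ^ 2 + εabs * μ ^ 2) :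
    (‖(∫ ω, restr F ((q : ℝ)⁻¹ • ∑ i, X i ω) ∂P) - restr F g‖ ^ 2 ≤ εμ * μ ^ 2) ∧
    (∫ ω, ‖restr F ((q : ℝ)⁻¹ • ∑ i, X i ω)‖ ^ 2 ∂P ≤
      (εF / q + 2) * ‖restr F g‖ ^ 2 + (εFc / q) * ‖restr Fᶜ g‖ ^ 2 +
        (εabs / q + 2 * εμ) * μ ^ 2) := by
  have : Nonempty (Fin q) := ⟨⟨0, hq⟩⟩
  set Y : Fin q → Ω → EuclideanSpace ℝ (Fin d) := fun i => restrL F ∘ X i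
  have hrestr_average (ω : Ω) : restr F ((q : ℝ)⁻¹ • ∑ i, X i ω) =
      (Fintype.card (Fin q) : ℝ)⁻¹ • ∑ i, Y i ω := by
    rw [← restrL_apply, map_smul, map_sum, Fintype.card_fin]; rfl
  have hYL2 (i : Fin q) : MemLp (Y i) 2 P := (restrL F).comp_memLp' (hL2 i)
  have hYindep : Pairwise fun i j => IndepFun (Y i) (Y j) P := fun i j hij =>
    (hindep.indepFun hij).comp (restrL F).continuous.measurable (restrL F).continuous.measurable
  have hYident (i : Fin q) : IdentDistrib (Y i) (Y ⟨0, hq⟩) P P :=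
    (hident i _).comp (restrL F).continuous.measurable
  simp only [hrestr_average]
  refine ⟨?_, ?_⟩
  · rw [integral_average_of_integral_eq (fun i => (hYL2 i).integrable one_le_two)
      (fun i => (hYident i).integral_eq)]
    exact hbias
  · rw [integral_norm_sq_average_of_pairwise_indepFun hYL2 hYindep
      (fun i => (hYident i).integral_eq)
      (fun i => ((hYident i).comp (measurable_norm.pow_const 2)).integral_eq), Fintype.card_fin]
    simp only [Y, Function.comp_apply, restrL_apply]
    set m := ∫ ω, restr F (X ⟨0, hq⟩ ω) ∂P
    have hm : ‖m‖ ^ 2 ≤ 2 * (εμ * μ ^ 2 + ‖restr F g‖ ^ 2) := by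
      linarith [norm_sq_le_two_mul_norm_sub_sq_add_norm_sq m (restr F g)]
    calc _ ≤ (∫ ω, ‖restr F (X ⟨0, hq⟩ ω)‖ ^ 2 ∂P) / q + ‖m‖ ^ 2 := by
          gcongr; exact sub_le_self _ (sq_nonneg _)
      _ ≤ (εF * ‖restr F g‖ ^ 2 + εFc * ‖restr Fᶜ g‖ ^ 2 + εabs * μ ^ 2) / q +
            2 * (εμ * μ ^ 2 + ‖restr F g‖ ^ 2) := by gcongr
      _ = _ := by ring

/-- Batching lemma: averaging `q` i.i.d. copies of a gradient estimator preserves the bias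
bound and reduces the second-moment bound. -/
theorem batching_lemma (d q : ℕ) (hq : 0 < q)
    {Ω : Type} [MeasurableSpace Ω] (P : Measure Ω) [IsProbabilityMeasure P]
    (X : Fin q → Ω → EuclideanSpace ℝ (Fin d))
    (hmeas : ∀ i, Measurable (X i))
    (hindep : iIndepFun X P)
    (hident : ∀ i j, IdentDistrib (X i) (X j) P P)
    (hint : ∀ i, Integrable (X i) P)
    (hL2 : ∀ i, MemLp (X i) 2 P)
    (g : EuclideanSpace ℝ (Fin d)) (F : Finset (Fin d))
    (μ εF εFc εabs εμ : ℝ) (hμ : 0 < μ)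
    (hεF : 0 ≤ εF) (hεFc : 0 ≤ εFc) (hεabs : 0 ≤ εabs) (hεμ : 0 ≤ εμ)
    (hbias : ‖(∫ ω, restr F (X ⟨0, hq⟩ ω) ∂P) - restr F g‖ ^ 2 ≤ εμ * μ ^ 2)
    (hmoment : ∫ ω, ‖restr F (X ⟨0, hq⟩ ω)‖ ^ 2 ∂P ≤
      εF * ‖restr F g‖ ^ 2 + εFc * ‖restr Fᶜ g‖ ^ 2 + εabs * μ ^ 2) :
    (‖(∫ ω, restr F ((q : ℝ)⁻¹ • ∑ i, X i ω) ∂P) - restr F g‖ ^ 2 ≤ εμ * μ ^ 2) ∧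
    (∫ ω, ‖restr F ((q : ℝ)⁻¹ • ∑ i, X i ω)‖ ^ 2 ∂P ≤
      (εF / q + 2) * ‖restr F g‖ ^ 2 + (εFc / q) * ‖restr Fᶜ g‖ ^ 2 +
        (εabs / q + 2 * εμ) * μ ^ 2) :=
  batching_lemma_general d q hq P X hindep hident hL2 g F μ εF εFc εabs εμ hbias hmoment
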